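/- ε-best reply of player x by overtaking (case b of Theorem 2, first branch of B_x): assume the utilities are normalized by pλ = 1 and c = 0, and that 0 < d0 := d_x(x0, y0) < d < d_y(x0, y0), where d = T·(v_max − v_min) and v_min < v_max. Let ε > 0 and let v ∈ Γ be such that v + d0/T + ε/T ≤ v_max, and set v* := v + d0/T + ε/T. Then u_x(x0, v*, y0, v) = D − ε, and for every w ∈ Γ, u_x(x0, w, y0, v) ≤ u_x(x0, v*, y0, v) + ε; i.e., v* is an ε-best reply of player x to player y driving at speed v. -/

import Mathlib

/-- The reduction of a real number `r` modulo the circuit length `D`: the relative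
position on the torus, `(r) mod D = r − D·⌊r/D⌋ ∈ [0, D)`. -/
noncomputable def modD (D r : ℝ) : ℝ := r - D * (⌊r / D⌋ : ℝ)

/-- The directed (clockwise) distance from `x` to `y` on the circuit of length `D`. -/
noncomputable def dirX (D x y : ℝ) : ℝ := if x ≤ y then y - x else D + y - x

/-- The directed (clockwise) distance from `y` to `x` on the circuit of length `D`. -/
noncomputable def dirY (D x y : ℝ) : ℝ := dirX D y x

/-- Normalized utility (pλ = 1, c = 0) of player x: starting from `x0`, `y0` and
driving at speeds `vx`, `vy` for time `T`. -/
noncomputable def uXn (D T x0 y0 vx vy : ℝ) : ℝ :=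
  if modD D (x0 + T * vx) ≠ modD D (y0 + T * vy) then
    dirX D (modD D (x0 + T * vx)) (modD D (y0 + T * vy))
  else D / 2

/-- Normalized utility (pλ = 1, c = 0) of player y. -/
noncomputable def uYn (D T x0 y0 vx vy : ℝ) : ℝ :=
  if modD D (x0 + T * vx) ≠ modD D (y0 + T * vy) then
    dirY D (modD D (x0 + T * vx)) (modD D (y0 + T * vy))
  else D / 2

/-!
Driving at `v*` for time `T`, player x covers the initial gap `d₀` to y plus a further `ε`, so
modulo `D` it ends exactly `ε` ahead of y and its directed distance to y is `D − ε`. Since the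
directed distance between two points of `[0, D)` is their difference reduced modulo `D`, no
speed gives x a utility of `D` or more.
-/

lemma modD_eq_toIcoMod {D : ℝ} (hD : 0 < D) (r : ℝ) : modD D r = toIcoMod hD 0 r := by
  rw [toIcoMod, toIcoDiv_eq_floor, modD, sub_zero, zsmul_eq_mul, mul_comm]

lemma modD_mem_Ico {D : ℝ} (hD : 0 < D) (r : ℝ) : modD D r ∈ Set.Ico 0 D := by
  simpa [modD_eq_toIcoMod hD] using toIcoMod_mem_Ico' hD r

lemma modD_eq_self {D r : ℝ} (hD : 0 < D) (hr : r ∈ Set.Ico 0 D) : modD D r = r := by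
  rw [modD_eq_toIcoMod hD, toIcoMod_eq_self]
  simpa using hr

lemma modD_add_self {D : ℝ} (hD : 0 < D) (r : ℝ) : modD D (r + D) = modD D r := by
  simp only [modD_eq_toIcoMod hD, toIcoMod_add_right]

lemma modD_sub_modD {D : ℝ} (hD : 0 < D) (p q : ℝ) :
    modD D (modD D q - modD D p) = modD D (q - p) := by
  simp only [modD_eq_toIcoMod hD, toIcoMod_eq_toIcoMod]
  refine ⟨⌊q / D⌋ - ⌊p / D⌋, ?_⟩
  simp only [← modD_eq_toIcoMod hD, modD, zsmul_eq_mul]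
  push_cast
  ring

lemma dirX_modD {D : ℝ} (hD : 0 < D) (p q : ℝ) :
    dirX D (modD D p) (modD D q) = modD D (q - p) := by
  rw [← modD_sub_modD hD, dirX]
  obtain ⟨hp0, hpD⟩ := modD_mem_Ico hD p
  obtain ⟨hq0, hqD⟩ := modD_mem_Ico hD q
  generalize modD D p = p' at *
  generalize modD D q = q' at *
  split_ifs with hpq
  · rw [modD_eq_self hD ⟨by linarith, by linarith⟩]
  · rw [← modD_add_self hD, modD_eq_self hD ⟨by linarith, by linarith⟩]
    ring

lemma modD_sub_dirX {D : ℝ} (hD : 0 < D) (r x y : ℝ) :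
    modD D (r - dirX D x y) = modD D (r - (y - x)) := by
  rw [dirX]
  split_ifs
  · rfl
  · rw [← modD_add_self hD]
    ring_nf

lemma modD_neg {D e : ℝ} (hD : 0 < D) (he : 0 < e) (heD : e ≤ D) : modD D (-e) = D - e := by
  rw [← modD_add_self hD, neg_add_eq_sub, modD_eq_self hD ⟨by linarith, by linarith⟩]

lemma uXn_lt {D : ℝ} (hD : 0 < D) (T x0 y0 vx vy : ℝ) : uXn D T x0 y0 vx vy < D := by
  rw [uXn]
  split_ifs
  · exact (dirX_modD hD _ _).trans_lt (modD_mem_Ico hD _).2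
  · linarith

lemma uXn_eq_modD_sub {D : ℝ} (hD : 0 < D) {T x0 y0 vx vy : ℝ}
    (h : modD D (y0 + T * vy - (x0 + T * vx)) ≠ 0) :
    uXn D T x0 y0 vx vy = modD D (y0 + T * vy - (x0 + T * vx)) := by
  rw [uXn, if_pos, dirX_modD hD]
  intro heq
  rw [← dirX_modD hD, heq, dirX, if_pos le_rfl, sub_self] at h
  exact h rfl

theorem eps_best_reply_x_overtaking_general
    (D T vmin vmax x0 y0 d0 ε v : ℝ)
    (hD : 0 < D) (hvmin : 0 < vmin) (hT : 0 < T)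
    (hshort : T * vmax < D / 2)
    (hd0 : d0 = dirX D x0 y0)
    (hd0pos : 0 < d0)
    (hε : 0 < ε) (hv : v ∈ Set.Icc vmin vmax)
    (hvstar : v + d0 / T + ε / T ≤ vmax) :
    uXn D T x0 y0 (v + d0 / T + ε / T) v = D - ε ∧
    ∀ w ∈ Set.Icc vmin vmax,
      uXn D T x0 y0 w v ≤ uXn D T x0 y0 (v + d0 / T + ε / T) v + ε := by
  have hTvstar : T * (v + d0 / T + ε / T) = T * v + d0 + ε := by field_simp
  have hεD : ε < D := by
    linarith [mul_le_mul_of_nonneg_left hvstar hT.le, mul_pos hT (hvmin.trans_le hv.1)]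
  have hgap : modD D (y0 + T * v - (x0 + T * (v + d0 / T + ε / T))) = D - ε := by
    rw [hTvstar, show y0 + T * v - (x0 + (T * v + d0 + ε)) = y0 - x0 - ε - d0 by ring, hd0,
      modD_sub_dirX hD, sub_sub_cancel_left, modD_neg hD hε hεD.le]
  have hmain : uXn D T x0 y0 (v + d0 / T + ε / T) v = D - ε := by
    rw [uXn_eq_modD_sub hD (by rw [hgap]; linarith), hgap]
  refine ⟨hmain, fun w _ => ?_⟩
  linarith [uXn_lt hD T x0 y0 w v]

/-- ε-best reply of player x by overtaking: if v + d₀/T + ε/T ≤ v_max, then the speed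
v* = v + d₀/T + ε/T yields payoff D − ε against player y driving at speed v, and is
an ε-best reply of player x. -/
theorem eps_best_reply_x_overtaking
    (D T vmin vmax x0 y0 d0 d ε v : ℝ)
    (hD : 0 < D) (hvmin : 0 < vmin) (hvv : vmin < vmax) (hT : 0 < T)
    (hshort : T * vmax < D / 2)
    (hx0 : x0 ∈ Set.Ico 0 D) (hy0 : y0 ∈ Set.Ico 0 D)
    (hd0 : d0 = dirX D x0 y0) (hd : d = T * (vmax - vmin))
    (hd0pos : 0 < d0) (hd0d : d0 < d) (hdy : d < dirY D x0 y0)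
    (hε : 0 < ε) (hv : v ∈ Set.Icc vmin vmax)
    (hvstar : v + d0 / T + ε / T ≤ vmax) :
    uXn D T x0 y0 (v + d0 / T + ε / T) v = D - ε ∧
    ∀ w ∈ Set.Icc vmin vmax,
      uXn D T x0 y0 w v ≤ uXn D T x0 y0 (v + d0 / T + ε / T) v + ε :=
  eps_best_reply_x_overtaking_general D T vmin vmax x0 y0 d0 ε v hD hvmin hT hshort hd0 hd0pos hε hv
    hvstar
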